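/- Let M be a positive integer and Γ₁, …, Γ_L pairwise coprime Gaussian integers with |Γ_i| ≥ √2 for each i, such that Γ = Γ₁⋯Γ_L is a positive integer; let γ_i = Γ/Γ_i and γ̄_i, Γ̄_i ∈ ℤ[i] with γ_i·γ̄_i + Γ_i·Γ̄_i = 1. Let σ_i > 0 and w_i = σ_i^{−2}/Σ_{j=1}^{L} σ_j^{−2}. Let N ∈ M·H, where H = {h₁ + h₂·i : 1 ≤ h₁, h₂ < Γ − 1}, set r_i := ⟨N⟩_{MΓ_i}, let Δr₁, …, Δr_L be complex numbers, and r̃_i := r_i + Δr_i. Let r̂^c be a minimizer of x ↦ Σ_{i=1}^{L} w_i·|d_M(⟨r̃_i⟩_M, x)|² over x ∈ F_M, q̂_i := [(r̃_i − r̂^c)/M], and N̂ := M·⟨ Σ_{i=1}^{L} γ̄_i·γ_i·q̂_i ⟩_Γ + r̂^c. Let 0 < τ ≤ M/4 and assume |Re(Δr_i)| < τ and |Im(Δr_i)| < τ for every i = 1, …, L. Then |Re(N̂ − N)| < τ and |Im(N̂ − N)| < τ. -/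

import Mathlib

open Complex MeasureTheory

noncomputable section

/-- `z` is a Gaussian integer, i.e. an element of `ℤ[i] ⊆ ℂ`. -/
def IsGaussInt (z : ℂ) : Prop := ∃ a b : ℤ, z = (a : ℂ) + (b : ℂ) * Complex.I

/-- Divisibility within the Gaussian integers. -/
def GaussDvd (d z : ℂ) : Prop := ∃ q : ℂ, IsGaussInt q ∧ z = d * q

/-- Two Gaussian integers are coprime: every common Gaussian-integer divisor is a unit. -/
def GaussCoprime (x y : ℂ) : Prop :=
  ∀ d : ℂ, IsGaussInt d → GaussDvd d x → GaussDvd d y →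
    d = 1 ∨ d = -1 ∨ d = Complex.I ∨ d = -Complex.I

/-- Componentwise floor `⌊z⌋ = ⌊Re z⌋ + ⌊Im z⌋·i`. -/
def cfloor (z : ℂ) : ℂ := (⌊z.re⌋ : ℂ) + (⌊z.im⌋ : ℂ) * Complex.I

/-- Componentwise rounding `[z] = [Re z] + [Im z]·i`, where `[x]` is the unique
integer with `-1/2 ≤ x - [x] < 1/2`. -/
def cround (z : ℂ) : ℂ := (round z.re : ℂ) + (round z.im : ℂ) * Complex.I

/-- Remainder of `z` modulo `m`: `⟨z⟩_m = z - m·⌊z/m⌋`. -/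
def cmod (z m : ℂ) : ℂ := z - m * cfloor (z / m)

/-- Circular distance `d_m(x, y) = x - y - [(x-y)/m]·m`. -/
def cdist (m x y : ℂ) : ℂ := x - y - cround ((x - y) / m) * m

/-- The complex remainder set `F_m = {m(a+b·i) : 0 ≤ a, b < 1}`. -/
def FM (m : ℂ) : Set ℂ :=
  {z | ∃ a b : ℝ, 0 ≤ a ∧ a < 1 ∧ 0 ≤ b ∧ b < 1 ∧ z = m * ((a : ℂ) + (b : ℂ) * Complex.I)}

/-- The set `S_m = {m(c+d·i) : -1/2 ≤ c, d < 1/2}`. -/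
def SM (m : ℂ) : Set ℂ :=
  {z | ∃ c d : ℝ, -(1/2) ≤ c ∧ c < 1/2 ∧ -(1/2) ≤ d ∧ d < 1/2 ∧
    z = m * ((c : ℂ) + (d : ℂ) * Complex.I)}


-- ===================== auxiliary lemmas =====================

/-- real circular residue -/
def rd (M u t : ℝ) : ℝ := u - t - round ((u - t)/M) * M

lemma rd_shift (M : ℝ) (hM : M ≠ 0) (u t : ℝ) (n : ℤ) : rd M (u + n*M) t = rd M u t := by
  unfold rd
  have h : (u + n*M - t)/M = (u - t)/M + n := by field_simp; ring
  rw [h, round_add_intCast]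
  push_cast
  ring

lemma rd_shift_t (M : ℝ) (hM : M ≠ 0) (u t : ℝ) (n : ℤ) : rd M u (t + n*M) = rd M u t := by
  unfold rd
  have h : (u - (t + n*M))/M = (u - t)/M + (-n : ℤ) := by push_cast; field_simp; ring
  rw [h, round_add_intCast]
  push_cast
  ring

lemma rd_translate (M u t s : ℝ) : rd M (s + u) (s + t) = rd M u t := by
  unfold rd
  ring_nf

lemma round_close (M x : ℝ) (hM : 0 < M) (hx : |x| < M/2) : round (x/M) = 0 := by
  rw [round_eq_zero_iff]
  rw [abs_lt] at hx
  constructor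
  · rw [le_div_iff₀ hM]; nlinarith
  · rw [div_lt_iff₀ hM]; nlinarith

lemma rd_small (M u t : ℝ) (hM : 0 < M) (h : |u - t| < M/2) : rd M u t = u - t := by
  unfold rd
  rw [round_close M (u-t) hM h]
  simp

lemma round_le_round_add_one (x y : ℝ) (h : x ≤ y + 1/2) : round x ≤ round y + 1 := by
  rw [round_eq, round_eq]
  have h1 : ⌊x + 1/2⌋ ≤ ⌊y + 1 + 1/2⌋ := Int.floor_le_floor (by linarith)
  have h2 : ⌊y + 1 + 1/2⌋ = ⌊y + 1/2⌋ + 1 := by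
    rw [show y + 1 + 1/2 = y + 1/2 + (1:ℤ) by push_cast; ring, Int.floor_add_intCast]
  omega

lemma pair_le (M a u v : ℝ) (habs : |a| < M/2) (hu : u = 0 ∨ u = 1) (hv : v = 0 ∨ v = 1) :
    a * (u - v) ≤ M/2 * ((u - v) * (u - v)) := by
  have h := abs_lt.mp habs
  rcases hu with h1 | h1 <;> rcases hv with h2 | h2 <;> rw [h1, h2] <;> norm_num <;> linarith

lemma pair_lt (M a u v : ℝ) (habs : |a| < M/2) (hu : u = 0 ∨ u = 1) (hv : v = 0 ∨ v = 1)
    (huv : u ≠ v) : a * (u - v) < M/2 * ((u - v) * (u - v)) := by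
  have h := abs_lt.mp habs
  rcases hu with h1 | h1 <;> rcases hv with h2 | h2 <;> rw [h1, h2] <;> norm_num <;>
    first
      | (exfalso; rw [h1, h2] at huv; exact huv rfl)
      | linarith

lemma core1d {L : ℕ} (M : ℝ) (hM : 0 < M) (w e : Fin L → ℝ)
    (hw : ∀ i, 0 < w i) (hws : ∑ i, w i = 1)
    (hsp : ∀ i j, |e i - e j| < M / 2) (θ : ℝ)
    (hmin : ∑ i, w i * (rd M (e i) θ)^2 ≤ ∑ i, w i * (e i - ∑ j, w j * e j)^2) :
    ∃ m : ℤ, θ = (∑ j, w j * e j) - m * M := by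
  classical
  have hne : Nonempty (Fin L) := by
    by_contra h
    rw [not_nonempty_iff] at h
    rw [Finset.univ_eq_empty] at hws
    simp at hws
  set eb := ∑ j, w j * e j with heb
  set k : Fin L → ℤ := fun i => round ((e i - θ)/M) with hk
  have hkk : ∀ i j, k i ≤ k j + 1 := by
    intro i j
    apply round_le_round_add_one
    have habs := (abs_lt.mp (hsp i j)).2
    have h2 : (e i - e j) / M < 1/2 := by rw [div_lt_iff₀ hM]; nlinarith
    have h3 : (e i - θ)/M = (e j - θ)/M + (e i - e j)/M := by ring
    linarith
  obtain ⟨i₀, -, hi₀⟩ := Finset.exists_min_image Finset.univ k ⟨Classical.arbitrary _, Finset.mem_univ _⟩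
  set c := k i₀ with hc
  set x : Fin L → ℝ := fun i => ((k i - c : ℤ) : ℝ) with hx
  have h01 : ∀ i, x i = 0 ∨ x i = 1 := by
    intro i
    have h1 : c ≤ k i := hi₀ i (Finset.mem_univ i)
    have h2 : k i ≤ c + 1 := hkk i i₀
    simp only [hx]
    rcases (by omega : k i - c = 0 ∨ k i - c = 1) with h | h <;> rw [h] <;> simp
  set p : ℝ := θ + c*M - eb with hp
  set W := ∑ i, w i * x i with hW
  set T := ∑ i, w i * (e i * x i) with hT
  set U := ∑ i, w i * (x i * x i) with hU
  set C' := ∑ i, w i * ((e i - eb) * x i) with hC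
  have hd0 : ∀ i, rd M (e i) θ = e i - θ - (k i : ℝ)*M := fun i => rfl
  have hd : ∀ i, rd M (e i) θ = (e i - eb) - p - x i * M := by
    intro i
    rw [hd0 i]
    simp only [hx, hp]
    push_cast
    ring
  have hE0 : ∑ i, w i * (e i - eb) = 0 := by
    have : ∑ i, w i * (e i - eb) = (∑ i, w i * e i) - eb * ∑ i, w i := by
      rw [Finset.mul_sum, ← Finset.sum_sub_distrib]
      congr 1; ext i; ring
    rw [this, hws]; simp [heb]
  have hCid : C' = T - eb * W := by
    rw [hC, hT, hW, Finset.mul_sum, ← Finset.sum_sub_distrib]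
    apply Finset.sum_congr rfl; intro i _; ring
  have hUW : U = W := by
    rw [hU, hW]
    apply Finset.sum_congr rfl; intro i _
    rcases h01 i with h | h <;> rw [h] <;> ring
  have key : ∑ i, w i * (rd M (e i) θ)^2
      = (∑ i, w i * (e i - eb)^2) - 2*M*C' + p^2 + 2*p*M*W + M^2*W := by
    have hterm : ∀ i, w i * (rd M (e i) θ)^2
        = w i * (e i - eb)^2 - 2*M*(w i * ((e i - eb) * x i)) - 2*p*(w i * (e i - eb))
          + p^2 * w i + 2*p*M*(w i * x i) + M^2*(w i * (x i * x i)) := by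
      intro i
      rw [hd i]; ring
    rw [Finset.sum_congr rfl (fun i _ => hterm i)]
    simp only [Finset.sum_add_distrib, Finset.sum_sub_distrib, ← Finset.mul_sum, ← Finset.sum_mul]
    rw [hE0, hws, ← hC, ← hW, ← hU, hUW]
    ring
  clear_value eb k c x p W T U C'
  by_cases hconst : ∀ i j : Fin L, x i = x j
  · set i₁ : Fin L := Classical.arbitrary _
    have hWx : W = x i₁ := by
      rw [hW]
      calc ∑ i, w i * x i = ∑ i, w i * x i₁ := Finset.sum_congr rfl (fun i _ => by rw [hconst i i₁])
        _ = x i₁ := by rw [← Finset.sum_mul, hws, one_mul]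
    have hC0 : C' = 0 := by
      rw [hC]
      calc ∑ i, w i * ((e i - eb) * x i) = ∑ i, (w i * (e i - eb)) * x i₁ :=
            Finset.sum_congr rfl (fun i _ => by rw [hconst i i₁]; ring)
        _ = 0 := by rw [← Finset.sum_mul, hE0, zero_mul]
    rcases h01 i₁ with h | h
    · rw [hWx, hC0, h] at key
      have hple : p^2 ≤ 0 := by
        have := hmin; rw [key] at this; linarith
      have hzero : p = 0 := by nlinarith [sq_nonneg p]
      refine ⟨c, ?_⟩
      rw [hp] at hzero
      linarith
    · rw [hWx, hC0, h] at key
      have hple : (p + M)^2 ≤ 0 := by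
        have := hmin; rw [key] at this; nlinarith
      have hzero : p = -M := by nlinarith [sq_nonneg (p + M)]
      refine ⟨c + 1, ?_⟩
      rw [hp] at hzero
      push_cast
      linarith
  · exfalso
    push_neg at hconst
    obtain ⟨i₁, j₁, hij⟩ := hconst
    have hsym : ∑ i, ∑ j, (w i * w j) * ((e i - e j) * (x i - x j)) = 2*C' := by
      have inner_eq : ∀ i : Fin L, (∑ j, (w i * w j) * ((e i - e j) * (x i - x j)))
          = w i * (e i * x i) - (w i * e i) * W - (w i * x i) * eb + w i * T := by
        intro i
        have hterm : ∀ j, (w i * w j) * ((e i - e j) * (x i - x j))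
            = (w i * (e i * x i)) * w j - (w i * e i) * (w j * x j)
              - (w i * x i) * (w j * e j) + w i * (w j * (e j * x j)) := by
          intro j; ring
        rw [Finset.sum_congr rfl (fun j _ => hterm j)]
        simp only [Finset.sum_add_distrib, Finset.sum_sub_distrib, ← Finset.mul_sum, ← Finset.sum_mul]
        rw [hws, ← hW, ← heb, ← hT]
        ring
      rw [Finset.sum_congr rfl (fun i _ => inner_eq i)]
      simp only [Finset.sum_add_distrib, Finset.sum_sub_distrib, ← Finset.mul_sum, ← Finset.sum_mul]
      rw [← heb, ← hW, ← hT, hws, hCid]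
      ring
    have hQ : ∑ i, ∑ j, (w i * w j) * ((x i - x j) * (x i - x j)) = 2*(W - W^2) := by
      have inner_eq : ∀ i : Fin L, (∑ j, (w i * w j) * ((x i - x j) * (x i - x j)))
          = w i * (x i * x i) - 2*((w i * x i) * W) + w i * U := by
        intro i
        have hterm : ∀ j, (w i * w j) * ((x i - x j) * (x i - x j))
            = (w i * (x i * x i)) * w j - 2*((w i * x i) * (w j * x j))
              + w i * (w j * (x j * x j)) := by
          intro j; ring
        rw [Finset.sum_congr rfl (fun j _ => hterm j)]
        simp only [Finset.sum_add_distrib, Finset.sum_sub_distrib, ← Finset.mul_sum, ← Finset.sum_mul]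
        rw [hws, ← hW, ← hU]
        ring
      rw [Finset.sum_congr rfl (fun i _ => inner_eq i)]
      simp only [Finset.sum_add_distrib, Finset.sum_sub_distrib, ← Finset.mul_sum, ← Finset.sum_mul]
      rw [← hU, ← hW, hUW, hws]
      ring
    have hstrict : ∑ i, ∑ j, (w i * w j) * ((e i - e j) * (x i - x j))
        < ∑ i, ∑ j, (w i * w j) * ((M/2) * ((x i - x j) * (x i - x j))) := by
      have hle : ∀ i j : Fin L, (w i * w j) * ((e i - e j) * (x i - x j))
          ≤ (w i * w j) * ((M/2) * ((x i - x j) * (x i - x j))) := by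
        intro i j
        exact mul_le_mul_of_nonneg_left (pair_le M (e i - e j) (x i) (x j) (hsp i j) (h01 i) (h01 j))
          (mul_pos (hw i) (hw j)).le
      apply Finset.sum_lt_sum
      · intro i _
        exact Finset.sum_le_sum (fun j _ => hle i j)
      · refine ⟨i₁, Finset.mem_univ _, Finset.sum_lt_sum (fun j _ => hle i₁ j) ⟨j₁, Finset.mem_univ _, ?_⟩⟩
        exact mul_lt_mul_of_pos_left
          (pair_lt M (e i₁ - e j₁) (x i₁) (x j₁) (hsp i₁ j₁) (h01 i₁) (h01 j₁) hij)
          (mul_pos (hw i₁) (hw j₁))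
    have hRHS : ∑ i, ∑ j, (w i * w j) * ((M/2) * ((x i - x j) * (x i - x j)))
        = (M/2) * ∑ i, ∑ j, (w i * w j) * ((x i - x j) * (x i - x j)) := by
      rw [Finset.mul_sum]
      apply Finset.sum_congr rfl; intro i _
      rw [Finset.mul_sum]
      apply Finset.sum_congr rfl; intro j _; ring
    rw [hRHS, hQ, hsym] at hstrict
    have hstrict2 : 2*M*C' < M^2*W - M^2*W^2 := by
      linarith [mul_lt_mul_of_pos_left hstrict hM]
    have h1 : p^2 + 2*p*M*W + M^2*W ≤ 2*M*C' := by linarith [key, hmin]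
    have h2 : (p + M*W)^2 = p^2 + 2*p*M*W + M^2*W^2 := by ring
    linarith [h1, hstrict2, h2, sq_nonneg (p + M*W)]

-- component lemmas for complex operations with real/integer modulus
lemma cfloor_re (z : ℂ) : (cfloor z).re = (⌊z.re⌋ : ℝ) := by simp [cfloor]
lemma cfloor_im (z : ℂ) : (cfloor z).im = (⌊z.im⌋ : ℝ) := by simp [cfloor]
lemma cround_re (z : ℂ) : (cround z).re = (round z.re : ℝ) := by simp [cround]
lemma cround_im (z : ℂ) : (cround z).im = (round z.im : ℝ) := by simp [cround]

lemma cmod_real_re (z : ℂ) (a : ℝ) : (cmod z (a:ℂ)).re = z.re - a * ⌊z.re / a⌋ := by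
  simp [cmod, cfloor, Complex.div_ofReal_re]
lemma cmod_real_im (z : ℂ) (a : ℝ) : (cmod z (a:ℂ)).im = z.im - a * ⌊z.im / a⌋ := by
  simp [cmod, cfloor, Complex.div_ofReal_im]

lemma cdist_real_re (a : ℝ) (u x : ℂ) : (cdist (a:ℂ) u x).re = rd a u.re x.re := by
  simp [cdist, cround, rd, Complex.div_ofReal_re]
lemma cdist_real_im (a : ℝ) (u x : ℂ) : (cdist (a:ℂ) u x).im = rd a u.im x.im := by
  simp [cdist, cround, rd, Complex.div_ofReal_im]

lemma abs_cdist_sq (a : ℝ) (u x : ℂ) :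
    ‖cdist (a:ℂ) u x‖^2 = (rd a u.re x.re)^2 + (rd a u.im x.im)^2 := by
  rw [Complex.sq_norm, Complex.normSq_apply, cdist_real_re, cdist_real_im]
  ring

lemma mem_FM_iff (a : ℝ) (ha : 0 < a) (z : ℂ) :
    z ∈ FM (a:ℂ) ↔ 0 ≤ z.re ∧ z.re < a ∧ 0 ≤ z.im ∧ z.im < a := by
  constructor
  · rintro ⟨u, v, hu0, hu1, hv0, hv1, rfl⟩
    have hre : ((a:ℂ) * ((u:ℂ) + (v:ℂ)*Complex.I)).re = a * u := by simp
    have him : ((a:ℂ) * ((u:ℂ) + (v:ℂ)*Complex.I)).im = a * v := by simp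
    rw [hre, him]
    refine ⟨by positivity, ?_, by positivity, ?_⟩ <;> nlinarith
  · rintro ⟨h1, h2, h3, h4⟩
    refine ⟨z.re / a, z.im / a, by positivity, by rw [div_lt_one ha]; linarith,
      by positivity, ?_, ?_⟩
    · rw [div_lt_one ha]; linarith
    · apply Complex.ext <;> simp <;> field_simp

lemma sub_floor_nonneg (x a : ℝ) (ha : 0 < a) : 0 ≤ x - a * ⌊x/a⌋ := by
  have h := Int.floor_le (x/a)
  have := (mul_le_mul_of_nonneg_left h ha.le)
  rw [mul_div_cancel₀ _ (ne_of_gt ha)] at this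
  linarith

lemma sub_floor_lt (x a : ℝ) (ha : 0 < a) : x - a * ⌊x/a⌋ < a := by
  have h := Int.lt_floor_add_one (x/a)
  have := (mul_lt_mul_of_pos_left h ha)
  rw [mul_add, mul_div_cancel₀ _ (ne_of_gt ha)] at this
  linarith

-- Gaussian integer bridge
local notation "ι" => GaussianInt.toComplex

lemma iota_re (g : GaussianInt) : (ι g).re = (g.re : ℝ) := by
  rw [GaussianInt.toComplex_def]; simp
lemma iota_im (g : GaussianInt) : (ι g).im = (g.im : ℝ) := by
  rw [GaussianInt.toComplex_def]; simp

lemma isGaussInt_iff (z : ℂ) : IsGaussInt z ↔ ∃ g : GaussianInt, ι g = z := by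
  constructor
  · rintro ⟨a, b, rfl⟩
    exact ⟨⟨a, b⟩, by rw [GaussianInt.toComplex_def]⟩
  · rintro ⟨g, rfl⟩
    exact ⟨g.re, g.im, by rw [GaussianInt.toComplex_def]⟩

lemma isGaussInt_iota (g : GaussianInt) : IsGaussInt (ι g) :=
  (isGaussInt_iff _).2 ⟨g, rfl⟩

lemma iota_mk_floor (z : ℂ) : ι (⟨⌊z.re⌋, ⌊z.im⌋⟩ : GaussianInt) = cfloor z := by
  rw [GaussianInt.toComplex_def, cfloor]

lemma gauss_unit_I : IsUnit ((⟨0,1⟩ : GaussianInt)) :=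
  IsUnit.of_mul_eq_one ⟨0,-1⟩ (by ext <;> simp [Zsqrtd.re_mul, Zsqrtd.im_mul])
lemma gauss_unit_negI : IsUnit ((⟨0,-1⟩ : GaussianInt)) :=
  IsUnit.of_mul_eq_one ⟨0,1⟩ (by ext <;> simp [Zsqrtd.re_mul, Zsqrtd.im_mul])


/-- Robustness of the fast MLE C-CRT when all remainder errors are bounded by
`τ ≤ M/4` in their real and imaginary parts. -/
theorem stmt19 (L : ℕ) (M : ℤ) (hM : 0 < M) (Γ : Fin L → ℂ)
    (hGauss : ∀ i, IsGaussInt (Γ i))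
    (habs : ∀ i, Real.sqrt 2 ≤ ‖Γ i‖)
    (hcop : ∀ i j, i ≠ j → GaussCoprime (Γ i) (Γ j))
    (G : ℤ) (hGpos : 0 < G) (hGprod : (∏ i, Γ i) = (G : ℂ))
    (γ γbar Γbar : Fin L → ℂ)
    (hγ : ∀ i, γ i = (∏ j, Γ j) / Γ i)
    (hγbar : ∀ i, IsGaussInt (γbar i)) (hΓbar : ∀ i, IsGaussInt (Γbar i))
    (hBezout : ∀ i, γ i * γbar i + Γ i * Γbar i = 1)
    (σ : Fin L → ℝ) (hσ : ∀ i, 0 < σ i)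
    (w : Fin L → ℝ) (hw : ∀ i, w i = (σ i)⁻¹ ^ 2 / ∑ j, (σ j)⁻¹ ^ 2)
    (N : ℂ)
    (hN : N ∈ (fun h => (M : ℂ) * h) ''
      {z : ℂ | 1 ≤ z.re ∧ z.re < (G : ℝ) - 1 ∧ 1 ≤ z.im ∧ z.im < (G : ℝ) - 1})
    (Δr : Fin L → ℂ)
    (rt : Fin L → ℂ) (hrt : ∀ i, rt i = cmod N ((M : ℂ) * Γ i) + Δr i)
    (rchat : ℂ) (hrcF : rchat ∈ FM (M : ℂ))
    (hrcmin : ∀ x ∈ FM (M : ℂ),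
      (∑ i, w i * ‖cdist (M : ℂ) (cmod (rt i) (M : ℂ)) rchat‖ ^ 2) ≤
      (∑ i, w i * ‖cdist (M : ℂ) (cmod (rt i) (M : ℂ)) x‖ ^ 2))
    (qhat : Fin L → ℂ) (hqhat : ∀ i, qhat i = cround ((rt i - rchat) / (M : ℂ)))
    (Nhat : ℂ)
    (hNhat : Nhat = (M : ℂ) * cmod (∑ i, γbar i * γ i * qhat i) (∏ i, Γ i) + rchat)
    (τ : ℝ) (hτpos : 0 < τ) (hτ : τ ≤ (M : ℝ) / 4)
    (hRe : ∀ i, |(Δr i).re| < τ) (hIm : ∀ i, |(Δr i).im| < τ) :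
    |(Nhat - N).re| < τ ∧ |(Nhat - N).im| < τ := by
  classical
  -- notation
  set Mr : ℝ := ((M:ℤ):ℝ) with hMrd
  set Gr : ℝ := ((G:ℤ):ℝ) with hGrd
  have hMr : (0:ℝ) < Mr := by rw [hMrd]; exact_mod_cast hM
  have hGr : (0:ℝ) < Gr := by rw [hGrd]; exact_mod_cast hGpos
  have hMc' : ((M:ℤ):ℂ) = ((Mr:ℝ):ℂ) := by rw [hMrd]; push_cast; ring
  have hGc' : ((G:ℤ):ℂ) = ((Gr:ℝ):ℂ) := by rw [hGrd]; push_cast; ring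
  -- N structure
  obtain ⟨ζ, ⟨hz1, hz2, hz3, hz4⟩, hNz⟩ := hN
  have hNre : N.re = Mr * ζ.re := by rw [← hNz, hMrd]; simp [Complex.mul_re]
  have hNim : N.im = Mr * ζ.im := by rw [← hNz, hMrd]; simp [Complex.mul_im]
  have hG3 : (3:ℤ) ≤ G := by
    have h2 : (2:ℝ) < ((G:ℤ):ℝ) := by rw [← hGrd]; linarith [hz1, hz2]
    have : (2:ℤ) < G := by exact_mod_cast h2
    omega
  have hLpos : 0 < L := by
    rcases Nat.eq_zero_or_pos L with h | h
    · exfalso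
      subst h
      rw [show (Finset.univ : Finset (Fin 0)) = ∅ from rfl, Finset.prod_empty] at hGprod
      have : (G:ℤ) = 1 := by exact_mod_cast hGprod.symm
      omega
    · exact h
  have hneL : Nonempty (Fin L) := ⟨⟨0, hLpos⟩⟩
  have huniv : (Finset.univ : Finset (Fin L)).Nonempty := Finset.univ_nonempty
  -- weights
  have hS : 0 < ∑ j, (σ j)⁻¹ ^ 2 :=
    Finset.sum_pos (fun j _ => by have := hσ j; positivity) huniv
  have hwpos : ∀ i, 0 < w i := fun i => by rw [hw i]; have := hσ i; positivity
  have hwsum : ∑ i, w i = 1 := by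
    rw [Finset.sum_congr rfl (fun i (_ : i ∈ Finset.univ) => hw i), ← Finset.sum_div]
    exact div_self (ne_of_gt hS)
  -- Γ nonzero
  have hsqrt2 : (0:ℝ) < Real.sqrt 2 := Real.sqrt_pos.mpr (by norm_num)
  have hΓne : ∀ i, Γ i ≠ 0 := by
    intro i h
    have := habs i
    rw [h, norm_zero] at this
    linarith
  -- Gaussian lifts
  choose A hA using fun i => (isGaussInt_iff _).1 (hGauss i)
  choose B hB using fun i => (isGaussInt_iff _).1 (hγbar i)
  choose Cb hCb using fun i => (isGaussInt_iff _).1 (hΓbar i)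
  set n : GaussianInt := ⟨⌊(N / ((M:ℤ):ℂ)).re⌋, ⌊(N / ((M:ℤ):ℂ)).im⌋⟩ with hnd
  have hn : GaussianInt.toComplex n = cfloor (N / ((M:ℤ):ℂ)) := iota_mk_floor _
  set nn : Fin L → GaussianInt :=
    fun i => ⟨⌊(N / (((M:ℤ):ℂ) * Γ i)).re⌋, ⌊(N / (((M:ℤ):ℂ) * Γ i)).im⌋⟩ with hnnd
  have hnn : ∀ i, GaussianInt.toComplex (nn i) = cfloor (N / (((M:ℤ):ℂ) * Γ i)) :=
    fun i => iota_mk_floor _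
  set q : Fin L → GaussianInt := fun i => n - A i * nn i with hqd
  set rc : ℂ := cmod N ((M:ℤ):ℂ) with hrcd
  have hrc : rc = N - ((M:ℤ):ℂ) * GaussianInt.toComplex n := by rw [hrcd, cmod, hn]
  have hR1 : ∀ i, cmod N (((M:ℤ):ℂ) * Γ i) = rc + ((M:ℤ):ℂ) * GaussianInt.toComplex (q i) := by
    intro i
    have hqi : q i = n - A i * nn i := rfl
    rw [cmod, ← hnn i, hrc, hqi, map_sub, map_mul, hA]
    ring
  -- components
  set e1 : Fin L → ℝ := fun i => (Δr i).re with he1d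
  set e2 : Fin L → ℝ := fun i => (Δr i).im with he2d
  set eb1 : ℝ := ∑ j, w j * e1 j with heb1d
  set eb2 : ℝ := ∑ j, w j * e2 j with heb2d
  have hrt' : ∀ i, rt i = rc + ((M:ℤ):ℂ) * GaussianInt.toComplex (q i) + Δr i := by
    intro i; rw [hrt i, hR1 i]
  have hmulre : ∀ z : ℂ, (((M:ℤ):ℂ) * z).re = Mr * z.re := by
    intro z; rw [hMc']; simp [Complex.mul_re]
  have hmulim : ∀ z : ℂ, (((M:ℤ):ℂ) * z).im = Mr * z.im := by
    intro z; rw [hMc']; simp [Complex.mul_im]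
  have hrtre : ∀ i, (rt i).re = rc.re + Mr * ((q i).re : ℝ) + e1 i := by
    intro i
    rw [hrt' i, Complex.add_re, Complex.add_re, hmulre, iota_re, he1d]
  have hrtim : ∀ i, (rt i).im = rc.im + Mr * ((q i).im : ℝ) + e2 i := by
    intro i
    rw [hrt' i, Complex.add_im, Complex.add_im, hmulim, iota_im, he2d]
  -- rc component ranges
  have hrcre : rc.re = N.re - Mr * ⌊N.re / Mr⌋ := by rw [hrcd, hMc', cmod_real_re]
  have hrcim : rc.im = N.im - Mr * ⌊N.im / Mr⌋ := by rw [hrcd, hMc', cmod_real_im]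
  have hrca : 0 ≤ rc.re := hrcre ▸ sub_floor_nonneg N.re Mr hMr
  have hrcb : rc.re < Mr := hrcre ▸ sub_floor_lt N.re Mr hMr
  have hrcc : 0 ≤ rc.im := hrcim ▸ sub_floor_nonneg N.im Mr hMr
  have hrcd2 : rc.im < Mr := hrcim ▸ sub_floor_lt N.im Mr hMr
  -- rchat component ranges
  have hrcF' : rchat ∈ FM ((Mr:ℝ):ℂ) := by rwa [hMc'] at hrcF
  obtain ⟨ht1a, ht1b, ht2a, ht2b⟩ := (mem_FM_iff Mr hMr rchat).1 hrcF'
  -- error bounds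
  have hτM : τ ≤ Mr / 4 := by rw [hMrd]; exact hτ
  have hsp1 : ∀ i j, |e1 i - e1 j| < Mr/2 := by
    intro i j
    have hi := abs_lt.mp (hRe i); have hj := abs_lt.mp (hRe j)
    rw [abs_lt]; constructor <;> simp only [he1d] <;> linarith
  have hsp2 : ∀ i j, |e2 i - e2 j| < Mr/2 := by
    intro i j
    have hi := abs_lt.mp (hIm i); have hj := abs_lt.mp (hIm j)
    rw [abs_lt]; constructor <;> simp only [he2d] <;> linarith
  have habs_eb1 : |eb1| < τ := by
    rw [heb1d]
    calc |∑ j, w j * e1 j| ≤ ∑ j, |w j * e1 j| := Finset.abs_sum_le_sum_abs _ _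
      _ = ∑ j, w j * |e1 j| := by
          apply Finset.sum_congr rfl; intro j _
          rw [abs_mul, abs_of_pos (hwpos j)]
      _ < ∑ j, w j * τ := by
          apply Finset.sum_lt_sum_of_nonempty huniv
          intro j _
          exact mul_lt_mul_of_pos_left (hRe j) (hwpos j)
      _ = τ := by rw [← Finset.sum_mul, hwsum, one_mul]
  have habs_eb2 : |eb2| < τ := by
    rw [heb2d]
    calc |∑ j, w j * e2 j| ≤ ∑ j, |w j * e2 j| := Finset.abs_sum_le_sum_abs _ _
      _ = ∑ j, w j * |e2 j| := by
          apply Finset.sum_congr rfl; intro j _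
          rw [abs_mul, abs_of_pos (hwpos j)]
      _ < ∑ j, w j * τ := by
          apply Finset.sum_lt_sum_of_nonempty huniv
          intro j _
          exact mul_lt_mul_of_pos_left (hIm j) (hwpos j)
      _ = τ := by rw [← Finset.sum_mul, hwsum, one_mul]
  have hclose1 : ∀ i, |e1 i - eb1| < Mr/2 := by
    intro i
    have h1 := abs_lt.mp (hRe i); have h2 := abs_lt.mp habs_eb1
    rw [abs_lt]; constructor <;> simp only [he1d] <;> linarith
  have hclose2 : ∀ i, |e2 i - eb2| < Mr/2 := by
    intro i
    have h1 := abs_lt.mp (hIm i); have h2 := abs_lt.mp habs_eb2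
    rw [abs_lt]; constructor <;> simp only [he2d] <;> linarith
  -- u and its shift structure
  set u : Fin L → ℂ := fun i => cmod (rt i) ((M:ℤ):ℂ) with hud
  have hu_eq : ∀ i, cmod (rt i) ((M:ℤ):ℂ) = u i := fun i => rfl
  have hure : ∀ i (x : ℝ), rd Mr (u i).re x = rd Mr (rc.re + e1 i) x := by
    intro i x
    have h1 : (u i).re = (rc.re + e1 i) + (((q i).re - ⌊(rt i).re / Mr⌋ : ℤ):ℝ) * Mr := by
      have : (u i).re = (rt i).re - Mr * ⌊(rt i).re / Mr⌋ := by
        rw [hud, hMc', cmod_real_re]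
      rw [this, hrtre i]
      push_cast
      ring
    rw [h1, rd_shift Mr (ne_of_gt hMr)]
  have huim : ∀ i (x : ℝ), rd Mr (u i).im x = rd Mr (rc.im + e2 i) x := by
    intro i x
    have h1 : (u i).im = (rc.im + e2 i) + (((q i).im - ⌊(rt i).im / Mr⌋ : ℤ):ℝ) * Mr := by
      have : (u i).im = (rt i).im - Mr * ⌊(rt i).im / Mr⌋ := by
        rw [hud, hMc', cmod_real_im]
      rw [this, hrtim i]
      push_cast
      ring
    rw [h1, rd_shift Mr (ne_of_gt hMr)]
  -- minimality in the real component
  obtain ⟨m1, hm1⟩ : ∃ m : ℤ, rchat.re - rc.re = eb1 - m * Mr := by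
    set g1 : ℤ := ⌊(rc.re + eb1)/Mr⌋ with hg1d
    set x1r : ℝ := (rc.re + eb1) - Mr * g1 with hx1rd
    have hx1r0 : 0 ≤ x1r := by rw [hx1rd, hg1d]; exact sub_floor_nonneg _ _ hMr
    have hx1r1 : x1r < Mr := by rw [hx1rd, hg1d]; exact sub_floor_lt _ _ hMr
    set xs1 : ℂ := (x1r:ℂ) + (rchat.im:ℂ) * Complex.I with hxs1d
    have hxs1re : xs1.re = x1r := by rw [hxs1d]; simp
    have hxs1im : xs1.im = rchat.im := by rw [hxs1d]; simp
    have hxs1mem : xs1 ∈ FM ((M:ℤ):ℂ) := by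
      rw [hMc', mem_FM_iff Mr hMr, hxs1re, hxs1im]
      exact ⟨hx1r0, hx1r1, ht2a, ht2b⟩
    have hmin_raw := hrcmin xs1 hxs1mem
    have hA1 : ∀ i, rd Mr (u i).re rchat.re = rd Mr (e1 i) (rchat.re - rc.re) := by
      intro i
      rw [hure i]
      conv_lhs => rw [show rchat.re = rc.re + (rchat.re - rc.re) by ring]
      exact rd_translate Mr (e1 i) (rchat.re - rc.re) rc.re
    have hA2 : ∀ i, rd Mr (u i).re xs1.re = e1 i - eb1 := by
      intro i
      rw [hure i, hxs1re]
      have hsh : x1r = (rc.re + eb1) + ((-g1 : ℤ):ℝ) * Mr := by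
        rw [hx1rd]; push_cast; ring
      rw [hsh, rd_shift_t Mr (ne_of_gt hMr), rd_translate Mr (e1 i) eb1 rc.re]
      exact rd_small Mr (e1 i) eb1 hMr (hclose1 i)
    have hL : ∑ i, w i * ‖cdist ((M:ℤ):ℂ) (u i) rchat‖^2
        = (∑ i, w i * (rd Mr (e1 i) (rchat.re - rc.re))^2)
          + ∑ i, w i * (rd Mr (u i).im rchat.im)^2 := by
      rw [← Finset.sum_add_distrib]
      apply Finset.sum_congr rfl; intro i _
      rw [hMc', abs_cdist_sq, hA1 i]
      ring
    have hRr : ∑ i, w i * ‖cdist ((M:ℤ):ℂ) (u i) xs1‖^2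
        = (∑ i, w i * (e1 i - eb1)^2)
          + ∑ i, w i * (rd Mr (u i).im rchat.im)^2 := by
      rw [← Finset.sum_add_distrib]
      apply Finset.sum_congr rfl; intro i _
      rw [hMc', abs_cdist_sq, hA2 i, hxs1im]
      ring
    rw [hL, hRr] at hmin_raw
    have hmin1 : ∑ i, w i * (rd Mr (e1 i) (rchat.re - rc.re))^2
        ≤ ∑ i, w i * (e1 i - eb1)^2 := by linarith
    exact core1d Mr hMr w e1 hwpos hwsum hsp1 (rchat.re - rc.re) hmin1
  -- minimality in the imaginary component
  obtain ⟨m2, hm2⟩ : ∃ m : ℤ, rchat.im - rc.im = eb2 - m * Mr := by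
    set g2 : ℤ := ⌊(rc.im + eb2)/Mr⌋ with hg2d
    set x2r : ℝ := (rc.im + eb2) - Mr * g2 with hx2rd
    have hx2r0 : 0 ≤ x2r := by rw [hx2rd, hg2d]; exact sub_floor_nonneg _ _ hMr
    have hx2r1 : x2r < Mr := by rw [hx2rd, hg2d]; exact sub_floor_lt _ _ hMr
    set xs2 : ℂ := (rchat.re:ℂ) + (x2r:ℂ) * Complex.I with hxs2d
    have hxs2re : xs2.re = rchat.re := by rw [hxs2d]; simp
    have hxs2im : xs2.im = x2r := by rw [hxs2d]; simp
    have hxs2mem : xs2 ∈ FM ((M:ℤ):ℂ) := by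
      rw [hMc', mem_FM_iff Mr hMr, hxs2re, hxs2im]
      exact ⟨ht1a, ht1b, hx2r0, hx2r1⟩
    have hmin_raw := hrcmin xs2 hxs2mem
    have hA1 : ∀ i, rd Mr (u i).im rchat.im = rd Mr (e2 i) (rchat.im - rc.im) := by
      intro i
      rw [huim i]
      conv_lhs => rw [show rchat.im = rc.im + (rchat.im - rc.im) by ring]
      exact rd_translate Mr (e2 i) (rchat.im - rc.im) rc.im
    have hA2 : ∀ i, rd Mr (u i).im xs2.im = e2 i - eb2 := by
      intro i
      rw [huim i, hxs2im]
      have hsh : x2r = (rc.im + eb2) + ((-g2 : ℤ):ℝ) * Mr := by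
        rw [hx2rd]; push_cast; ring
      rw [hsh, rd_shift_t Mr (ne_of_gt hMr), rd_translate Mr (e2 i) eb2 rc.im]
      exact rd_small Mr (e2 i) eb2 hMr (hclose2 i)
    have hL : ∑ i, w i * ‖cdist ((M:ℤ):ℂ) (u i) rchat‖^2
        = (∑ i, w i * (rd Mr (e2 i) (rchat.im - rc.im))^2)
          + ∑ i, w i * (rd Mr (u i).re rchat.re)^2 := by
      rw [← Finset.sum_add_distrib]
      apply Finset.sum_congr rfl; intro i _
      rw [hMc', abs_cdist_sq, hA1 i]
      ring
    have hRr : ∑ i, w i * ‖cdist ((M:ℤ):ℂ) (u i) xs2‖^2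
        = (∑ i, w i * (e2 i - eb2)^2)
          + ∑ i, w i * (rd Mr (u i).re rchat.re)^2 := by
      rw [← Finset.sum_add_distrib]
      apply Finset.sum_congr rfl; intro i _
      rw [hMc', abs_cdist_sq, hA2 i, hxs2re]
      ring
    rw [hL, hRr] at hmin_raw
    have hmin2 : ∑ i, w i * (rd Mr (e2 i) (rchat.im - rc.im))^2
        ≤ ∑ i, w i * (e2 i - eb2)^2 := by linarith
    exact core1d Mr hMr w e2 hwpos hwsum hsp2 (rchat.im - rc.im) hmin2
  -- identification of qhat
  set q0 : GaussianInt := ⟨m1, m2⟩ with hq0d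
  have hqhat' : ∀ i, qhat i = GaussianInt.toComplex (q i + q0) := by
    intro i
    rw [hqhat i]
    apply Complex.ext
    · rw [cround_re, iota_re]
      have hdiv : ((rt i - rchat)/((M:ℤ):ℂ)).re = ((rt i).re - rchat.re)/Mr := by
        rw [hMc', Complex.div_ofReal_re, Complex.sub_re]
      have hval : ((rt i).re - rchat.re)/Mr = (e1 i - eb1)/Mr + (((q i).re + m1 : ℤ):ℝ) := by
        rw [hrtre i, show rchat.re = rc.re + eb1 - (m1:ℝ) * Mr by linarith [hm1]]
        push_cast
        field_simp
        ring
      rw [hdiv, hval, round_add_intCast, round_close Mr _ hMr (hclose1 i)]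
      have hre : (q i + q0).re = (q i).re + m1 := by
        rw [Zsqrtd.re_add, hq0d]
      rw [hre]
      push_cast
      ring
    · rw [cround_im, iota_im]
      have hdiv : ((rt i - rchat)/((M:ℤ):ℂ)).im = ((rt i).im - rchat.im)/Mr := by
        rw [hMc', Complex.div_ofReal_im, Complex.sub_im]
      have hval : ((rt i).im - rchat.im)/Mr = (e2 i - eb2)/Mr + (((q i).im + m2 : ℤ):ℝ) := by
        rw [hrtim i, show rchat.im = rc.im + eb2 - (m2:ℝ) * Mr by linarith [hm2]]
        push_cast
        field_simp
        ring
      rw [hdiv, hval, round_add_intCast, round_close Mr _ hMr (hclose2 i)]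
      have him : (q i + q0).im = (q i).im + m2 := by
        rw [Zsqrtd.im_add, hq0d]
      rw [him]
      push_cast
      ring
  -- CRT machinery
  have hγi : ∀ i, γ i = ∏ j ∈ Finset.univ.erase i, Γ j := by
    intro i
    rw [hγ i, ← Finset.mul_prod_erase Finset.univ Γ (Finset.mem_univ i),
      mul_div_cancel_left₀ _ (hΓne i)]
  set gg : Fin L → GaussianInt := fun i => ∏ j ∈ Finset.univ.erase i, A j with hggd
  have hgg : ∀ i, GaussianInt.toComplex (gg i) = γ i := by
    intro i
    have : GaussianInt.toComplex (gg i) = ∏ j ∈ Finset.univ.erase i, GaussianInt.toComplex (A j) :=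
      map_prod _ _ _
    rw [this, hγi i]
    exact Finset.prod_congr rfl (fun j _ => hA j)
  have hBez : ∀ i, B i * gg i + A i * Cb i = 1 := by
    intro i
    apply GaussianInt.toComplex_inj.1
    rw [map_one, map_add, map_mul, map_mul, hB, hgg, hA, hCb, ← hBezout i]
    ring
  set Sg : GaussianInt := ∑ i, B i * gg i * (q i + q0) with hSgd
  have hSg : GaussianInt.toComplex Sg = ∑ i, γbar i * γ i * qhat i := by
    rw [hSgd, map_sum]
    apply Finset.sum_congr rfl; intro i _
    rw [map_mul, map_mul, hB, hgg, hqhat' i]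
  have hdvd : ∀ i, A i ∣ Sg - (n + q0) := by
    intro i
    have hsplit : Sg = B i * gg i * (q i + q0)
        + ∑ j ∈ Finset.univ.erase i, B j * gg j * (q j + q0) := by
      rw [hSgd, ← Finset.add_sum_erase _ _ (Finset.mem_univ i)]
    have h2 : B i * gg i * (q i + q0) - (n + q0) = A i * (-(Cb i) * (q i + q0) - nn i) := by
      have hqi : q i = n - A i * nn i := rfl
      linear_combination (q i + q0) * hBez i + hqi
    have h3 : A i ∣ ∑ j ∈ Finset.univ.erase i, B j * gg j * (q j + q0) := by
      apply Finset.dvd_sum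
      intro j hj
      have hij : i ∈ Finset.univ.erase j :=
        Finset.mem_erase.mpr ⟨fun h => (Finset.ne_of_mem_erase hj) h.symm, Finset.mem_univ i⟩
      have hd : A i ∣ gg j := by rw [hggd]; exact Finset.dvd_prod_of_mem A hij
      exact Dvd.dvd.mul_right (Dvd.dvd.mul_left hd (B j)) _
    rw [hsplit, show B i * gg i * (q i + q0)
        + (∑ j ∈ Finset.univ.erase i, B j * gg j * (q j + q0)) - (n + q0)
      = (B i * gg i * (q i + q0) - (n + q0))
        + ∑ j ∈ Finset.univ.erase i, B j * gg j * (q j + q0) by ring]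
    exact dvd_add (by rw [h2]; exact dvd_mul_right _ _) h3
  have hcp : ∀ i j : Fin L, i ≠ j → IsCoprime (A i) (A j) := by
    intro i j hij
    rw [← EuclideanDomain.gcd_isUnit_iff]
    set D : GaussianInt := EuclideanDomain.gcd (A i) (A j) with hDd
    have hdl : D ∣ A i := EuclideanDomain.gcd_dvd_left _ _
    have hdr : D ∣ A j := EuclideanDomain.gcd_dvd_right _ _
    clear_value D
    obtain ⟨ei, hei⟩ := hdl
    obtain ⟨ej, hej⟩ := hdr
    have h1 : GaussDvd (GaussianInt.toComplex D) (Γ i) :=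
      ⟨GaussianInt.toComplex ei, isGaussInt_iota _, by rw [← hA i, hei, map_mul]⟩
    have h2 : GaussDvd (GaussianInt.toComplex D) (Γ j) :=
      ⟨GaussianInt.toComplex ej, isGaussInt_iota _, by rw [← hA j, hej, map_mul]⟩
    rcases hcop i j hij _ (isGaussInt_iota _) h1 h2 with h | h | h | h
    · rw [show D = 1 from GaussianInt.toComplex_inj.1 (by rw [h, map_one])]
      exact isUnit_one
    · rw [show D = -1 from GaussianInt.toComplex_inj.1 (by rw [h, map_neg, map_one])]
      exact isUnit_one.neg
    · rw [show D = (⟨0,1⟩ : GaussianInt) from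
        GaussianInt.toComplex_inj.1 (by rw [h, GaussianInt.toComplex_def]; simp)]
      exact gauss_unit_I
    · rw [show D = (⟨0,-1⟩ : GaussianInt) from
        GaussianInt.toComplex_inj.1 (by rw [h, GaussianInt.toComplex_def]; simp)]
      exact gauss_unit_negI
  have hpair : ((Finset.univ : Finset (Fin L)) : Set (Fin L)).Pairwise (Function.onFun IsCoprime A) :=
    fun i _ j _ hij => hcp i j hij
  obtain ⟨dd, hdd⟩ := Finset.prod_dvd_of_coprime hpair (fun i _ => hdvd i)
  have hiprod : GaussianInt.toComplex (∏ i, A i) = ((G:ℤ):ℂ) := by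
    calc GaussianInt.toComplex (∏ i, A i) = ∏ i, GaussianInt.toComplex (A i) := map_prod _ _ _
      _ = ∏ i, Γ i := Finset.prod_congr rfl (fun i _ => hA i)
      _ = ((G:ℤ):ℂ) := hGprod
  have hSum : (∑ i, γbar i * γ i * qhat i)
      = GaussianInt.toComplex (n + q0) + ((G:ℤ):ℂ) * GaussianInt.toComplex dd := by
    rw [← hSg, show Sg = (n + q0) + (∏ i, A i) * dd from by linear_combination hdd]
    rw [map_add, map_mul, hiprod]
  -- integer ranges
  have hNdivre : (N / ((M:ℤ):ℂ)).re = ζ.re := by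
    rw [hMc', Complex.div_ofReal_re, hNre, mul_div_cancel_left₀ _ (ne_of_gt hMr)]
  have hNdivim : (N / ((M:ℤ):ℂ)).im = ζ.im := by
    rw [hMc', Complex.div_ofReal_im, hNim, mul_div_cancel_left₀ _ (ne_of_gt hMr)]
  have hnre : n.re = ⌊ζ.re⌋ := by rw [hnd, hNdivre]
  have hnim : n.im = ⌊ζ.im⌋ := by rw [hnd, hNdivim]
  have hnre1 : 1 ≤ n.re := by rw [hnre]; exact Int.le_floor.mpr (by exact_mod_cast hz1)
  have hnim1 : 1 ≤ n.im := by rw [hnim]; exact Int.le_floor.mpr (by exact_mod_cast hz3)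
  have hnre2 : n.re ≤ G - 2 := by
    have h1 : (n.re : ℝ) < (G:ℝ) - 1 := by
      rw [hnre]
      calc ((⌊ζ.re⌋:ℤ):ℝ) ≤ ζ.re := Int.floor_le _
        _ < (G:ℝ) - 1 := hz2
    have : (n.re : ℝ) < ((G - 1 : ℤ):ℝ) := by push_cast; linarith
    have := (by exact_mod_cast this : n.re < G - 1)
    omega
  have hnim2 : n.im ≤ G - 2 := by
    have h1 : (n.im : ℝ) < (G:ℝ) - 1 := by
      rw [hnim]
      calc ((⌊ζ.im⌋:ℤ):ℝ) ≤ ζ.im := Int.floor_le _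
        _ < (G:ℝ) - 1 := hz4
    have : (n.im : ℝ) < ((G - 1 : ℤ):ℝ) := by push_cast; linarith
    have := (by exact_mod_cast this : n.im < G - 1)
    omega
  have hτpos' : (0:ℝ) < τ := hτpos
  have hm1b : -1 ≤ m1 ∧ m1 ≤ 1 := by
    have h1 : (m1:ℝ) * Mr = eb1 - rchat.re + rc.re := by linarith [hm1]
    have hb1 := abs_lt.mp habs_eb1
    have hup : (m1:ℝ) * Mr < 2 * Mr := by linarith
    have hdn : (-2:ℝ) * Mr < (m1:ℝ) * Mr := by linarith
    have hup' : (m1:ℝ) < 2 := lt_of_mul_lt_mul_right hup hMr.le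
    have hdn' : (-2:ℝ) < (m1:ℝ) := lt_of_mul_lt_mul_right hdn hMr.le
    constructor
    · have : (-2:ℤ) < m1 := by exact_mod_cast hdn'
      omega
    · have : m1 < 2 := by exact_mod_cast hup'
      omega
  have hm2b : -1 ≤ m2 ∧ m2 ≤ 1 := by
    have h1 : (m2:ℝ) * Mr = eb2 - rchat.im + rc.im := by linarith [hm2]
    have hb2 := abs_lt.mp habs_eb2
    have hup : (m2:ℝ) * Mr < 2 * Mr := by linarith
    have hdn : (-2:ℝ) * Mr < (m2:ℝ) * Mr := by linarith
    have hup' : (m2:ℝ) < 2 := lt_of_mul_lt_mul_right hup hMr.le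
    have hdn' : (-2:ℝ) < (m2:ℝ) := lt_of_mul_lt_mul_right hdn hMr.le
    constructor
    · have : (-2:ℤ) < m2 := by exact_mod_cast hdn'
      omega
    · have : m2 < 2 := by exact_mod_cast hup'
      omega
  have hq0re : (n + q0).re = n.re + m1 := by rw [Zsqrtd.re_add, hq0d]
  have hq0im : (n + q0).im = n.im + m2 := by rw [Zsqrtd.im_add, hq0d]
  have ha0re : 0 ≤ n.re + m1 ∧ n.re + m1 < G := by omega
  have ha0im : 0 ≤ n.im + m2 ∧ n.im + m2 < G := by omega
  -- cmod computation
  have hfloor0 : ∀ a : ℤ, 0 ≤ a → a < G → ⌊(a:ℝ)/Gr⌋ = 0 := by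
    intro a h0 h1
    rw [Int.floor_eq_zero_iff]
    constructor
    · positivity
    · rw [div_lt_one hGr, hGrd]
      exact_mod_cast h1
  have hcm : cmod (GaussianInt.toComplex (n + q0) + ((G:ℤ):ℂ) * GaussianInt.toComplex dd)
      ((G:ℤ):ℂ) = GaussianInt.toComplex (n + q0) := by
    have hmulreG : ∀ z : ℂ, (((G:ℤ):ℂ) * z).re = Gr * z.re := by
      intro z; rw [hGc']; simp [Complex.mul_re]
    have hmulimG : ∀ z : ℂ, (((G:ℤ):ℂ) * z).im = Gr * z.im := by
      intro z; rw [hGc']; simp [Complex.mul_im]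
    apply Complex.ext
    · rw [hGc', cmod_real_re, ← hGc']
      have hzre : (GaussianInt.toComplex (n + q0) + ((G:ℤ):ℂ) * GaussianInt.toComplex dd).re
          = ((n.re + m1 : ℤ):ℝ) + Gr * (dd.re:ℝ) := by
        rw [Complex.add_re, hmulreG, iota_re, iota_re, hq0re]
      rw [hzre]
      have hdivG : (((n.re + m1 : ℤ):ℝ) + Gr * (dd.re:ℝ))/Gr
          = ((n.re + m1 : ℤ):ℝ)/Gr + ((dd.re:ℤ):ℝ) := by
        field_simp
      rw [hdivG, Int.floor_add_intCast, hfloor0 _ ha0re.1 ha0re.2, iota_re, hq0re]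
      push_cast
      ring
    · rw [hGc', cmod_real_im, ← hGc']
      have hzim : (GaussianInt.toComplex (n + q0) + ((G:ℤ):ℂ) * GaussianInt.toComplex dd).im
          = ((n.im + m2 : ℤ):ℝ) + Gr * (dd.im:ℝ) := by
        rw [Complex.add_im, hmulimG, iota_im, iota_im, hq0im]
      rw [hzim]
      have hdivG : (((n.im + m2 : ℤ):ℝ) + Gr * (dd.im:ℝ))/Gr
          = ((n.im + m2 : ℤ):ℝ)/Gr + ((dd.im:ℤ):ℝ) := by
        field_simp
      rw [hdivG, Int.floor_add_intCast, hfloor0 _ ha0im.1 ha0im.2, iota_im, hq0im]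
      push_cast
      ring
  -- final computation
  have hNhat2 : Nhat = ((M:ℤ):ℂ) * GaussianInt.toComplex (n + q0) + rchat := by
    rw [hNhat, hGprod, hSum, hcm]
  have hfre : (Nhat - N).re = eb1 := by
    have hNdec : N = ((M:ℤ):ℂ) * GaussianInt.toComplex n + rc := by
      rw [hrc]; ring
    rw [hNhat2]
    conv_lhs => rw [hNdec]
    rw [Complex.sub_re, Complex.add_re, Complex.add_re, hmulre, hmulre, iota_re, iota_re, hq0re]
    push_cast
    linarith [hm1]
  have hfim : (Nhat - N).im = eb2 := by
    have hNdec : N = ((M:ℤ):ℂ) * GaussianInt.toComplex n + rc := by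
      rw [hrc]; ring
    rw [hNhat2]
    conv_lhs => rw [hNdec]
    rw [Complex.sub_im, Complex.add_im, Complex.add_im, hmulim, hmulim, iota_im, iota_im, hq0im]
    push_cast
    linarith [hm2]
  exact ⟨hfre ▸ habs_eb1, hfim ▸ habs_eb2⟩
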